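/- Let A and B be graded ℤ[U]-modules of HF⁺-type. Then there is a constant D such that for every integer k ≥ D the following holds: if there is an isomorphism of truncations A_{≤k} ≅ B_{≤k} (a family of group isomorphisms A_d ≅ B_d for d ≤ k commuting with U), then A ≅ B as graded ℤ[U]-modules (a family of group isomorphisms A_d ≅ B_d for all d ∈ ℤ commuting with U). -/

import Mathlib

/-- A graded `ℤ[U]`-module: a family of abelian groups `M d` (`d ∈ ℤ`) with maps
`U : M d →+ M (d-2)`. It is of `HF⁺`-type if `U` is eventually an isomorphism in high degrees
and the groups vanish in all sufficiently small degrees. -/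
def IsHFPlusType (M : ℤ → Type*) [∀ d, AddCommGroup (M d)]
    (U : ∀ d : ℤ, M d →+ M (d - 2)) : Prop :=
  (∃ N : ℤ, ∀ d : ℤ, N ≤ d → Function.Bijective (U d)) ∧
  (∃ N₀ : ℤ, ∀ d : ℤ, d ≤ N₀ → ∀ x : M d, x = 0)

/-!
Above the truncation degree `k`, `U` identifies each group with the one two degrees lower, so
an isomorphism of truncations extends degree by degree by transporting it along `U`:
`e d := U_B⁻¹ ∘ e (d - 2) ∘ U_A` for `d > k`. Compatibility with `U` then holds by construction.
-/

section Extension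

variable {A B : ℤ → Type*} [∀ d, AddCommGroup (A d)] [∀ d, AddCommGroup (B d)]
  {UA : ∀ d : ℤ, A d →+ A (d - 2)} {UB : ∀ d : ℤ, B d →+ B (d - 2)} {k : ℤ}
  (hA : ∀ d : ℤ, k < d → Function.Bijective (UA d))
  (hB : ∀ d : ℤ, k < d → Function.Bijective (UB d))
  (e : ∀ d : ℤ, d ≤ k → (A d ≃+ B d))

noncomputable def extendAddEquiv (d : ℤ) : A d ≃+ B d :=
  if hd : d ≤ k then e d hd
  else ((AddEquiv.ofBijective (UA d) (hA d (by omega))).trans (extendAddEquiv (d - 2))).trans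
    (AddEquiv.ofBijective (UB d) (hB d (by omega))).symm
termination_by (d - k).toNat

theorem extendAddEquiv_of_le {d : ℤ} (hd : d ≤ k) : extendAddEquiv hA hB e d = e d hd := by
  rw [extendAddEquiv, dif_pos hd]

theorem extendAddEquiv_of_lt {d : ℤ} (hd : k < d) (x : A d) :
    extendAddEquiv hA hB e d x =
      (AddEquiv.ofBijective (UB d) (hB d hd)).symm (extendAddEquiv hA hB e (d - 2) (UA d x)) := by
  rw [extendAddEquiv, dif_neg (not_le.mpr hd)]
  rfl

theorem extendAddEquiv_map_U
    (he : ∀ (d : ℤ) (hd : d ≤ k) (x : A d),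
      e (d - 2) ((Int.sub_le_self d two_pos.le).trans hd) (UA d x) = UB d (e d hd x))
    (d : ℤ) (x : A d) :
    extendAddEquiv hA hB e (d - 2) (UA d x) = UB d (extendAddEquiv hA hB e d x) := by
  rcases le_or_gt d k with hd | hd
  · rw [extendAddEquiv_of_le hA hB e hd, extendAddEquiv_of_le hA hB e (by omega), he d hd]
  · rw [extendAddEquiv_of_lt hA hB e hd]
    exact (AddEquiv.ofBijective_apply_symm_apply _ _).symm

end Extension

/-- Let `A` and `B` be graded `ℤ[U]`-modules of `HF⁺`-type.  There is a constant `D` such that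
for every `k ≥ D`: if the truncations `A_{≤k}` and `B_{≤k}` are isomorphic (a family of group
isomorphisms `A_d ≃+ B_d` for `d ≤ k` commuting with `U`), then `A ≅ B` as graded
`ℤ[U]`-modules (a family of isomorphisms for all `d ∈ ℤ` commuting with `U`). -/
theorem stmt2 (A B : ℤ → Type*) [∀ d, AddCommGroup (A d)] [∀ d, AddCommGroup (B d)]
    (UA : ∀ d : ℤ, A d →+ A (d - 2)) (UB : ∀ d : ℤ, B d →+ B (d - 2))
    (hA : IsHFPlusType A UA) (hB : IsHFPlusType B UB) :
    ∃ D : ℤ, ∀ k : ℤ, D ≤ k →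
      (∃ e : ∀ d : ℤ, d ≤ k → (A d ≃+ B d),
        ∀ (d : ℤ) (hd : d ≤ k) (x : A d),
          e (d - 2) (by omega) (UA d x) = UB d (e d hd x)) →
      ∃ e : ∀ d : ℤ, A d ≃+ B d,
        ∀ (d : ℤ) (x : A d), e (d - 2) (UA d x) = UB d (e d x) := by
  obtain ⟨⟨NA, hNA⟩, -⟩ := hA
  obtain ⟨⟨NB, hNB⟩, -⟩ := hB
  refine ⟨max NA NB, fun k hk ⟨e, he⟩ => ?_⟩
  have hA' : ∀ d, k < d → Function.Bijective (UA d) := fun d hd => hNA d (by omega)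
  have hB' : ∀ d, k < d → Function.Bijective (UB d) := fun d hd => hNB d (by omega)
  exact ⟨extendAddEquiv hA' hB' e, extendAddEquiv_map_U hA' hB' e he⟩
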